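/- arXiv:1106.6079 — 3 statements merged into one kernel-verified Lean document; each statement's English description precedes it below -/
import Mathlib

section
/- For every regular fractional ideal b of O and every canonical ideal c of O, one has λ((c : b)·Ō / (c : b)) = λ(b / (b : Ō)). (Lemma 2.11) -/
/-- The length of the `O`-module `A ⧸ B` (the supremum of lengths of chains of
`O`-submodules of the quotient). -/
noncomputable def olen (O : Type) {K : Type} [CommRing O] [CommRing K] [Algebra O K]
    (A B : Submodule O K) : WithBot (WithTop ℕ) :=
  Order.krullDim (Submodule O (↥A ⧸ (Submodule.comap A.subtype B)))

/-- `b` is a fractional ideal of `O` in `K`: a nonzero `O`-submodule of `K` admitting a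
regular denominator in `O`. -/
def IsFracIdeal {O K : Type} [CommRing O] [CommRing K] [Algebra O K]
    (b : Submodule O K) : Prop :=
  b ≠ ⊥ ∧ ∃ x ∈ nonZeroDivisors O, ∀ z ∈ b, x • z ∈ (1 : Submodule O K)

/-- `b` is a regular fractional ideal of `O`: a fractional ideal with `b · K = K`. -/
def IsRegularFrac {O K : Type} [CommRing O] [CommRing K] [Algebra O K]
    (b : Submodule O K) : Prop :=
  IsFracIdeal b ∧ Submodule.span K (b : Set K) = ⊤

/-- `c` is a canonical ideal of `O`: a regular fractional ideal with `a = c : (c : a)` for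
every regular fractional ideal `a`. -/
def IsCanonicalCM {O K : Type} [CommRing O] [CommRing K] [Algebra O K]
    (c : Submodule O K) : Prop :=
  IsRegularFrac c ∧ ∀ a : Submodule O K, IsRegularFrac a → a = c / (c / a)

/-- `b` is self-dual: `b = c : b` for some canonical ideal `c`. -/
def IsSelfDualCM {O K : Type} [CommRing O] [CommRing K] [Algebra O K]
    (b : Submodule O K) : Prop :=
  ∃ c : Submodule O K, IsCanonicalCM c ∧ b = c / b

/-!
Because `c` is canonical, `x ↦ c : x` is an inclusion-reversing involution on regular
fractional ideals. It sends `c : b` to `b`, and `(c : b)Ō` to `(c : (c : b)) : Ō = b : Ō`.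
Every module lying between `c : b` and `(c : b)Ō`, or between `b : Ō` and `b`, is again a
regular fractional ideal, so the involution is an order-reversing bijection between these two
intervals of submodules. Both lengths are the Krull dimension of the corresponding interval,
hence they agree.
-/
open Set nonZeroDivisors IsLocalization

section IntervalDuality

variable {α : Type*} [PartialOrder α] {f : α → α} {a b : α}

def Antitone.IccOrderIsoDual (hf : Antitone f) (hab : a ≤ b)
    (hleft : ∀ x ∈ Icc a b, f (f x) = x) (hright : ∀ y ∈ Icc (f b) (f a), f (f y) = y) :
    Icc a b ≃o (Icc (f b) (f a))ᵒᵈ where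
  toFun x := OrderDual.toDual ⟨f x, hf x.2.2, hf x.2.1⟩
  invFun y := ⟨f (OrderDual.ofDual y).1,
    (hleft a ⟨le_rfl, hab⟩).symm.trans_le (hf (OrderDual.ofDual y).2.2),
    (hf (OrderDual.ofDual y).2.1).trans_eq (hleft b ⟨hab, le_rfl⟩)⟩
  left_inv x := Subtype.ext (hleft x x.2)
  right_inv y := Subtype.ext (hright _ (OrderDual.ofDual y).2)
  map_rel_iff' {x x'} := by
    change f x' ≤ f x ↔ x.1 ≤ x'.1
    refine ⟨fun h => ?_, fun h => hf h⟩
    simpa only [hleft x x.2, hleft x' x'.2] using hf h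

theorem Antitone.krullDim_Icc_eq (hf : Antitone f) (hab : a ≤ b)
    (hleft : ∀ x ∈ Icc a b, f (f x) = x) (hright : ∀ y ∈ Icc (f b) (f a), f (f y) = y) :
    Order.krullDim (Icc a b) = Order.krullDim (Icc (f b) (f a)) := by
  rw [Order.krullDim_eq_of_orderIso (hf.IccOrderIsoDual hab hleft hright),
    Order.krullDim_orderDual]

end IntervalDuality

namespace Submodule

section

variable {R M : Type*} [Ring R] [AddCommGroup M] [Module R M]

def comapSubtypeIciOrderIsoIcc {A B : Submodule R M} (h : B ≤ A) :
    Ici (B.comap A.subtype) ≃o Icc B A where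
  toFun q := ⟨q.1.map A.subtype,
    by simpa only [map_comap_subtype, inf_eq_right.mpr h] using map_mono (f := A.subtype) q.2,
    map_subtype_le A q.1⟩
  invFun D := ⟨D.1.comap A.subtype, comap_mono D.2.1⟩
  left_inv q := Subtype.ext (comap_map_eq_of_injective A.injective_subtype q.1)
  right_inv D := Subtype.ext ((map_comap_subtype A D.1).trans (inf_eq_right.mpr D.2.2))
  map_rel_iff' := map_le_map_iff_of_injective A.injective_subtype _ _

end

section

variable {R A : Type*} [CommSemiring R] [CommSemiring A] [Algebra R A]

theorem div_mul_eq_div_div (c d e : Submodule R A) : c / (d * e) = c / d / e :=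
  eq_of_forall_le_iff fun x => by
    rw [le_div_iff_mul_le, le_div_iff_mul_le, le_div_iff_mul_le, mul_assoc, mul_comm e d]

theorem div_antitone (c : Submodule R A) : Antitone (c / ·) := fun _ _ h =>
  le_div_iff_mul_le.mpr ((mul_le_mul_right h _).trans (le_div_iff_mul_le.mp le_rfl))

theorem div_le_self {d : Submodule R A} (h : 1 ≤ d) (c : Submodule R A) : c / d ≤ c :=
  fun x hx => by simpa using hx 1 (one_le.mp h)

end

end Submodule

theorem olen_eq_krullDim_Icc {O K : Type} [CommRing O] [CommRing K] [Algebra O K]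
    {A B : Submodule O K} (h : B ≤ A) : olen O A B = Order.krullDim (Icc B A) :=
  Order.krullDim_eq_of_orderIso
    ((Submodule.comapMkQRelIso _).trans (Submodule.comapSubtypeIciOrderIsoIcc h))

section RegularFractionalIdeals

variable {O K : Type} [CommRing O] [CommRing K] [Algebra O K] {b c : Submodule O K}

theorem isFracIdeal_iff : IsFracIdeal b ↔ b ≠ ⊥ ∧ IsFractional O⁰ b := by
  simp [IsFracIdeal, IsFractional, IsInteger, Submodule.mem_one]

theorem IsRegularFrac.isFractional (hb : IsRegularFrac b) : IsFractional O⁰ b :=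
  (isFracIdeal_iff.mp hb.1).2

theorem IsRegularFrac.of_le_of_le {a d : Submodule O K} (hb : IsRegularFrac b)
    (ha : IsFractional O⁰ a) (hbd : b ≤ d) (hda : d ≤ a) : IsRegularFrac d :=
  ⟨isFracIdeal_iff.mpr ⟨ne_bot_of_le_ne_bot hb.1.1 hbd,
      FractionalIdeal.isFractional_of_le (J := ⟨a, ha⟩) hda⟩,
    top_unique (hb.2 ▸ Submodule.span_mono hbd)⟩

variable [IsLocalization O⁰ K]

theorem IsRegularFrac.exists_algebraMap_mem (hb : IsRegularFrac b) :
    ∃ s ∈ O⁰, algebraMap O K s ∈ b := by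
  obtain ⟨y, hy, z, hz⟩ :=
    (mem_span_iff O⁰ (S := K)).mp (hb.2.symm ▸ Submodule.mem_top (x := 1))
  refine ⟨z, z.2, ?_⟩
  rw [Submodule.span_eq] at hy
  convert hy using 1
  rw [← mul_one (algebraMap O K z), hz, smul_eq_mul, ← mul_assoc, mul_comm _ (mk' K 1 z),
    mk'_spec, map_one, one_mul]

theorem isRegularFrac_of_algebraMap_mem [Nontrivial K] (hb : IsFractional O⁰ b) {s : O}
    (hs : s ∈ O⁰) (hsb : algebraMap O K s ∈ b) : IsRegularFrac b :=
  have hu : IsUnit (algebraMap O K s) := map_units K ⟨s, hs⟩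
  ⟨isFracIdeal_iff.mpr ⟨(Submodule.ne_bot_iff b).mpr ⟨_, hsb, hu.ne_zero⟩, hb⟩,
    Ideal.eq_top_of_isUnit_mem _ (Submodule.subset_span hsb) hu⟩

theorem IsRegularFrac.div (hc : IsRegularFrac c) (hb : IsFractional O⁰ b) {s : O}
    (hs : s ∈ O⁰) (hsb : algebraMap O K s ∈ b) : IsRegularFrac (c / b) := by
  obtain ⟨z, -, hz⟩ := Submodule.exists_mem_ne_zero_of_ne_bot hc.1.1
  have : Nontrivial K := nontrivial_of_ne z 0 hz
  obtain ⟨t, ht, htc⟩ := hc.exists_algebraMap_mem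
  obtain ⟨x, hx, hxb⟩ := hb
  obtain ⟨y, hy, hyc⟩ := hc.isFractional
  have hfrac : IsFractional O⁰ (c / b) := by
    refine ⟨y * s, mul_mem hy hs, fun z hz => ?_⟩
    rw [mul_comm, mul_smul, Algebra.smul_def s, mul_comm, smul_mul_assoc]
    exact hyc _ (hz _ hsb)
  refine isRegularFrac_of_algebraMap_mem hfrac (mul_mem hx ht) fun z hz => ?_
  obtain ⟨o, ho⟩ := hxb z hz
  rw [map_mul, mul_right_comm, ← Algebra.smul_def, ← ho, ← Algebra.smul_def]
  exact c.smul_mem o htc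

end RegularFractionalIdeals

theorem statement_0_general (O K : Type)
    [CommRing O]
    [CommRing K] [Algebra O K] [IsLocalization (nonZeroDivisors O) K]
    (hfin : Module.Finite O (integralClosure O K))
    (OB : Submodule O K) (hOB : OB = Subalgebra.toSubmodule (integralClosure O K))
    (b : Submodule O K) (hb : IsRegularFrac b)
    (c : Submodule O K) (hc : IsCanonicalCM c) :
    olen O ((c / b) * OB) (c / b) = olen O b (b / OB) := by
  have hOB_one : 1 ≤ OB := hOB ▸ Submodule.one_le.mpr (one_mem (integralClosure O K))
  have hOB_frac : IsFractional O⁰ OB :=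
    hOB ▸ FractionalIdeal.isFractional_of_fg (Module.Finite.iff_fg.mp hfin)
  obtain ⟨s, hs, hsb⟩ := hb.exists_algebraMap_mem
  have hcb : IsRegularFrac (c / b) := hc.1.div hb.isFractional hs hsb
  have hbOB : IsRegularFrac (b / OB) :=
    hb.div hOB_frac (one_mem O⁰) (by simpa using Submodule.one_le.mp hOB_one)
  have hb_dual : c / (c / b) = b := (hc.2 b hb).symm
  have hbOB_dual : c / (c / b * OB) = b / OB := by rw [Submodule.div_mul_eq_div_div, hb_dual]
  have hinvol_left : ∀ x ∈ Icc (c / b) (c / b * OB), c / (c / x) = x := fun x hx =>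
    (hc.2 x (hcb.of_le_of_le (hcb.isFractional.mul hOB_frac) hx.1 hx.2)).symm
  have hinvol_right : ∀ y ∈ Icc (b / OB) b, c / (c / y) = y := fun y hy =>
    (hc.2 y (hbOB.of_le_of_le hb.isFractional hy.1 hy.2)).symm
  rw [olen_eq_krullDim_Icc (le_mul_of_one_le_right' hOB_one),
    olen_eq_krullDim_Icc (Submodule.div_le_self hOB_one b),
    c.div_antitone.krullDim_Icc_eq (le_mul_of_one_le_right' hOB_one) hinvol_left
      (by rwa [hbOB_dual, hb_dual]), hbOB_dual, hb_dual]

theorem statement_0 (k O K : Type) [Field k] [PerfectField k]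
    [CommRing O] [IsNoetherianRing O] [IsLocalRing O] [Algebra k O]
    [CommRing K] [Algebra O K] [IsLocalization (nonZeroDivisors O) K]
    [Algebra k K] [IsScalarTower k O K]
    (hdim : ringKrullDim O = 1)
    (hCM : ∃ x ∈ IsLocalRing.maximalIdeal O, x ∈ nonZeroDivisors O)
    (hfin : Module.Finite O (integralClosure O K))
    (OB : Submodule O K) (hOB : OB = Subalgebra.toSubmodule (integralClosure O K))
    (b : Submodule O K) (hb : IsRegularFrac b)
    (c : Submodule O K) (hc : IsCanonicalCM c) :
    olen O ((c / b) * OB) (c / b) = olen O b (b / OB) :=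
  statement_0_general O K hfin OB hOB b hb c hc
end

section
/- Assume k is infinite. Let b be a fractional ideal of O and let v ∈ ℤ^r. Then there exists z ∈ b∖{0} with v(z) = v if and only if J^b(v) ≠ J^b(v + e_i) for every i ∈ {1, …, r}. (Lemma 3.1) -/
/-- The dimension over `k` of the quotient `A / B` of two `O`-submodules of `K`,
viewed as `k`-vector spaces. -/
noncomputable def qdim (k : Type) {O K : Type} [Field k] [CommRing O] [CommRing K]
    [Algebra k O] [Algebra O K] [Algebra k K] [IsScalarTower k O K]
    (A B : Submodule O K) : ℕ :=
  Module.finrank k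
    (↥(Submodule.restrictScalars k A) ⧸
      (Submodule.comap (Submodule.restrictScalars k A).subtype (Submodule.restrictScalars k B)))

/-- The `i`-th component of the value vector `v(a)` of a (fractional) ideal `a`:
the minimum of `v i` over the nonzero elements of `a`. -/
noncomputable def idealVal {O K : Type} [CommRing O] [CommRing K] [Algebra O K] {r : ℕ}
    (v : Fin r → K → ℤ) (a : Submodule O K) (i : Fin r) : ℤ :=
  sInf {n : ℤ | ∃ z ∈ a, z ≠ 0 ∧ v i z = n}

/-- `γ^b := v(b : Ō) - v(b·Ō)`. -/
noncomputable def gammaB {O K : Type} [CommRing O] [CommRing K] [Algebra O K] {r : ℕ}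
    (v : Fin r → K → ℤ) (Obar b : Submodule O K) : Fin r → ℤ :=
  fun i => idealVal v (b / Obar) i - idealVal v (b * Obar) i

/-- `c` is a canonical ideal of `O`: a fractional ideal with `a = c : (c : a)` for every
fractional ideal `a`. -/
def IsCanonicalIdeal {O K : Type} [CommRing O] [CommRing K] [Algebra O K]
    (c : Submodule O K) : Prop :=
  IsFracIdeal c ∧ ∀ a : Submodule O K, IsFracIdeal a → a = c / (c / a)

/-- `b` is self-dual: `b = c : b` for some canonical ideal `c`. -/
def IsSelfDual {O K : Type} [CommRing O] [CommRing K] [Algebra O K]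
    (b : Submodule O K) : Prop :=
  ∃ c : Submodule O K, IsCanonicalIdeal c ∧ b = c / b

/-- The value set `S(b) = { v(z) - v(b·Ō) | z ∈ b \ {0} }`. -/
def Sset {O K : Type} [CommRing O] [CommRing K] [Algebra O K] {r : ℕ}
    (v : Fin r → K → ℤ) (Obar b : Submodule O K) : Set (Fin r → ℤ) :=
  {w | ∃ z ∈ b, z ≠ 0 ∧ w = fun i => v i z - idealVal v (b * Obar) i}

/-- `Δ(n) = Δ_1(n) ∪ ⋯ ∪ Δ_r(n)` for a subset `S ⊆ ℤ^r`. -/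
def Delta {r : ℕ} (S : Set (Fin r → ℤ)) (n : Fin r → ℤ) : Set (Fin r → ℤ) :=
  {σ | σ ∈ S ∧ ∃ i, σ i = n i ∧ ∀ j, j ≠ i → n j < σ j}

/-- `S ⊆ ℤ^r` is symmetric if there is `τ` with `w ∈ S ↔ Δ(τ - w) = ∅` for all `w`. -/
def IsSymmetricSet {r : ℕ} (S : Set (Fin r → ℤ)) : Prop :=
  ∃ τ : Fin r → ℤ, ∀ w : Fin r → ℤ, w ∈ S ↔ Delta S (τ - w) = ∅

/-!
Extending each `v i` by `v i 0 = ⊤` turns it into an additive valuation that is trivial on `k`.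
For `z, z'` with `v i z, v i z' ≥ w i`, one of them with equality, the value `v i (z + c • z')`
exceeds `w i` for at most one `c ∈ k`: two such `c ≠ c'` would give `v i z' > w i` via
`(c - c') • z'`, and then `v i z > w i`. As `k` is infinite, a generic `k`-linear combination of
elements of `b` attaining `w i` in the `i`-th coordinate (which exist by `J^b(w) ≠ J^b(w + e_i)`)
attains `w` in all coordinates at once.
-/

section IntValuation

variable {K : Type*} [Field K] (v : K → ℤ)
  (hmul : ∀ x y : K, x ≠ 0 → y ≠ 0 → v (x * y) = v x + v y)
  (hadd : ∀ x y : K, x ≠ 0 → y ≠ 0 → x + y ≠ 0 → min (v x) (v y) ≤ v (x + y))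

include hmul in
lemma map_one_of_map_mul : v 1 = 0 := by
  have := hmul 1 1 one_ne_zero one_ne_zero
  rw [mul_one] at this
  omega

noncomputable def addValuationOfInt : AddValuation K (WithTop ℤ) :=
  open Classical in
  AddValuation.of (fun x => if x = 0 then ⊤ else (v x : WithTop ℤ)) (if_pos rfl)
    (by simp [map_one_of_map_mul v hmul])
    (by
      intro x y
      rcases eq_or_ne x 0 with rfl | hx
      · rw [zero_add, if_pos rfl, min_top_left]
      rcases eq_or_ne y 0 with rfl | hy
      · rw [add_zero, if_pos rfl, min_top_right]
      by_cases hxy : x + y = 0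
      · simp [hxy]
      simp only [hx, hy, hxy, if_false]
      exact_mod_cast hadd x y hx hy hxy)
    (by
      intro x y
      rcases eq_or_ne x 0 with rfl | hx
      · simp
      rcases eq_or_ne y 0 with rfl | hy
      · simp
      simp only [hx, hy, mul_eq_zero, or_self, if_false]
      exact_mod_cast hmul x y hx hy)

lemma addValuationOfInt_apply_of_ne_zero {x : K} (hx : x ≠ 0) :
    addValuationOfInt v hmul hadd x = v x := by
  simp [addValuationOfInt, hx]

end IntValuation

namespace AddValuation

variable {k K Γ : Type*} [Field k] [Field K] [Algebra k K] [LinearOrderedAddCommMonoidWithTop Γ]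

lemma map_algebraMap_eq_zero (v : AddValuation K Γ) (hv : ∀ c : k, 0 ≤ v (algebraMap k K c))
    {c : k} (hc : c ≠ 0) : v (algebraMap k K c) = 0 := by
  have hsum : v (algebraMap k K c) + v (algebraMap k K c⁻¹) = 0 := by
    rw [← map_mul, ← _root_.map_mul, mul_inv_cancel₀ hc, _root_.map_one, map_one]
  exact le_antisymm (hsum ▸ le_add_of_nonneg_right (hv c⁻¹)) (hv c)

section TrivialOn

variable (v : AddValuation K Γ) (hv : ∀ c : k, c ≠ 0 → v (algebraMap k K c) = 0)
include hv

lemma map_smul_of_ne_zero {c : k} (hc : c ≠ 0) (x : K) : v (c • x) = v x := by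
  rw [Algebra.smul_def, map_mul, hv c hc, zero_add]

lemma le_map_smul (c : k) (x : K) : v x ≤ v (c • x) := by
  rcases eq_or_ne c 0 with rfl | hc
  · simp
  · exact (map_smul_of_ne_zero v hv hc x).ge

lemma subsingleton_setOf_lt_map_add_smul {z z' : K} {γ : Γ} (h : ¬(γ < v z ∧ γ < v z')) :
    {c : k | γ < v (z + c • z')}.Subsingleton := by
  intro c hc c' hc'
  by_contra hne
  have hz' : γ < v z' :=
    calc γ < min (v (z + c • z')) (v (z + c' • z')) := lt_min hc hc'
      _ ≤ v (z + c • z' - (z + c' • z')) := map_sub v _ _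
      _ = v z' := by
        rw [add_sub_add_left_eq_sub, ← sub_smul, map_smul_of_ne_zero v hv (sub_ne_zero.2 hne)]
  have hz : γ < v z :=
    calc γ < min (v (z + c • z')) (v (c • z')) := lt_min hc (hz'.trans_le (le_map_smul v hv _ _))
      _ ≤ v (z + c • z' - c • z') := map_sub v _ _
      _ = v z := by rw [add_sub_cancel_right]
  exact h ⟨hz, hz'⟩

end TrivialOn

theorem exists_mem_forall_map_eq [Infinite k] {ι : Type*} (v : ι → AddValuation K Γ)
    (hv : ∀ i (c : k), c ≠ 0 → v i (algebraMap k K c) = 0) (V : Submodule k K) (w : ι → Γ)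
    (S : Finset ι) (hw : ∀ i ∈ S, ∃ z ∈ V, (∀ j, w j ≤ v j z) ∧ v i z = w i) :
    ∃ z ∈ V, (∀ j, w j ≤ v j z) ∧ ∀ i ∈ S, v i z = w i := by
  classical
  induction S using Finset.induction_on with
  | empty => exact ⟨0, V.zero_mem, fun j => by simp, by simp⟩
  | @insert j S hjS IH =>
    obtain ⟨z, hzV, hz, hzS⟩ := IH fun i hi => hw i (Finset.mem_insert_of_mem hi)
    obtain ⟨z', hz'V, hz', hz'j⟩ := hw j (Finset.mem_insert_self j S)
    have hbad : (⋃ i ∈ (insert j S : Finset ι), {c : k | w i < v i (z + c • z')}).Finite := by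
      refine (insert j S).finite_toSet.biUnion fun i hi => ?_
      refine (subsingleton_setOf_lt_map_add_smul (v i) (hv i) ?_).finite
      rcases Finset.mem_insert.1 hi with rfl | hiS
      · exact fun h => h.2.ne' hz'j
      · exact fun h => h.1.ne' (hzS i hiS)
    obtain ⟨c, hc⟩ := hbad.infinite_compl.nonempty
    have hle : ∀ i, w i ≤ v i (z + c • z') := fun i =>
      (le_min (hz i) ((hz' i).trans (le_map_smul (v i) (hv i) c z'))).trans (map_add _ _ _)
    refine ⟨z + c • z', V.add_mem hzV (V.smul_mem c hz'V), hle, fun i hi => ?_⟩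
    exact le_antisymm (not_lt.1 fun hlt => hc (Set.mem_biUnion hi hlt)) (hle i)

end AddValuation

lemma forall_add_single_one_le_iff {ι : Type*} [DecidableEq ι] (w u : ι → ℤ) (i : ι) :
    (∀ j, (w + Pi.single i 1 : ι → ℤ) j ≤ u j) ↔ (∀ j, w j ≤ u j) ∧ w i < u i := by
  refine ⟨fun h => ⟨fun j => ?_, by simpa using h i⟩, fun ⟨h, hi⟩ j => ?_⟩ <;>
    rcases eq_or_ne j i with rfl | hj
  · simpa using (h j).trans' (by simp)
  · simpa [hj] using h j
  · simpa using hi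
  · simpa [hj] using h j

lemma filtration_ne_add_single_iff {O K ι : Type*} [CommRing O] [CommRing K] [Algebra O K]
    [DecidableEq ι] (v : ι → K → ℤ) (J : Submodule O K → (ι → ℤ) → Submodule O K)
    (hJ : ∀ a w z, z ∈ J a w ↔ z ∈ a ∧ (z = 0 ∨ ∀ i, w i ≤ v i z))
    (a : Submodule O K) (w : ι → ℤ) (i : ι) :
    J a w ≠ J a (w + Pi.single i 1) ↔ ∃ z ∈ a, z ≠ 0 ∧ (∀ j, w j ≤ v j z) ∧ v i z = w i := by
  have hmono : J a (w + Pi.single i 1) ≤ J a w := fun z => by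
    simp only [hJ, forall_add_single_one_le_iff]
    tauto
  rw [Ne, ← hmono.ge_iff_eq', SetLike.not_le_iff_exists]
  simp only [hJ, forall_add_single_one_le_iff]
  constructor
  · rintro ⟨z, ⟨hza, hz⟩, hz'⟩
    have hz0 : z ≠ 0 := fun h => hz' ⟨hza, .inl h⟩
    have hle := hz.resolve_left hz0
    exact ⟨z, hza, hz0, hle, le_antisymm (not_lt.1 fun h => hz' ⟨hza, .inr ⟨hle, h⟩⟩) (hle i)⟩
  · rintro ⟨z, hza, hz0, hz, hzi⟩
    refine ⟨z, ⟨hza, .inr hz⟩, ?_⟩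
    rintro ⟨-, h0 | ⟨-, hlt⟩⟩
    exacts [hz0 h0, hlt.ne' hzi]

theorem statement_9_general (k O K : Type) [Field k]
    [Infinite k]
    [CommRing O] [Algebra k O]
    [Field K] [Algebra O K] [Algebra k K] [IsScalarTower k O K]
    (r : ℕ)
    (v : Fin r → K → ℤ)
    (hvmul : ∀ (i : Fin r) (x y : K), x ≠ 0 → y ≠ 0 → v i (x * y) = v i x + v i y)
    (hvadd : ∀ (i : Fin r) (x y : K), x ≠ 0 → y ≠ 0 → x + y ≠ 0 →
      min (v i x) (v i y) ≤ v i (x + y))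
    (hvint : ∀ x : K, x ≠ 0 → (x ∈ integralClosure O K ↔ ∀ i, 0 ≤ v i x))
    (J : Submodule O K → (Fin r → ℤ) → Submodule O K)
    (hJ : ∀ (a : Submodule O K) (w : Fin r → ℤ) (z : K),
      z ∈ J a w ↔ z ∈ a ∧ (z = 0 ∨ ∀ i, w i ≤ v i z))
    (b : Submodule O K) (hb : IsFracIdeal b) :
    ∀ w : Fin r → ℤ,
      (∃ z : K, z ∈ b ∧ z ≠ 0 ∧ ∀ i, v i z = w i) ↔
        ∀ i : Fin r, J b w ≠ J b (w + Pi.single i 1) := by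
  intro w
  set val := fun i => addValuationOfInt (v i) (hvmul i) (hvadd i)
  have hval {i : Fin r} {x : K} (hx : x ≠ 0) : val i x = v i x :=
    addValuationOfInt_apply_of_ne_zero _ _ _ hx
  have hint : ∀ x ∈ integralClosure O K, ∀ i, 0 ≤ val i x := fun x hx i => by
    rcases eq_or_ne x 0 with rfl | hx0
    · simp
    · rw [hval hx0]
      exact_mod_cast (hvint x hx0).1 hx i
  have halg (c : k) : algebraMap k K c ∈ integralClosure O K := by
    rw [IsScalarTower.algebraMap_apply k O K]
    exact Subalgebra.algebraMap_mem _ _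
  have hk : ∀ i (c : k), c ≠ 0 → val i (algebraMap k K c) = 0 := fun i _ hc =>
    (val i).map_algebraMap_eq_zero (fun c => hint _ (halg c) i) hc
  constructor
  · rintro ⟨z, hzb, hz0, hvz⟩ i
    exact (filtration_ne_add_single_iff v J hJ b w i).2 ⟨z, hzb, hz0, fun j => (hvz j).ge, hvz i⟩
  · intro h
    obtain ⟨z, hzb, -, hz⟩ := AddValuation.exists_mem_forall_map_eq val hk (b.restrictScalars k)
      (fun i => (w i : WithTop ℤ)) Finset.univ fun i _ => by
        obtain ⟨z, hzb, hz0, hz, hzi⟩ := (filtration_ne_add_single_iff v J hJ b w i).1 (h i)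
        exact ⟨z, hzb, fun j => by rw [hval hz0]; exact_mod_cast hz j, by rw [hval hz0, hzi]⟩
    rcases isEmpty_or_nonempty (Fin r) with hr | ⟨⟨i₀⟩⟩
    · obtain ⟨z, hzb, hz0⟩ := (Submodule.ne_bot_iff b).1 hb.1
      exact ⟨z, hzb, hz0, isEmptyElim⟩
    · have hz0 : z ≠ 0 := fun h0 => by simpa [h0] using hz i₀ (Finset.mem_univ _)
      exact ⟨z, hzb, hz0, fun i => by exact_mod_cast (hval hz0).symm.trans (hz i (Finset.mem_univ _))⟩

theorem statement_9 (k O K : Type) [Field k] [PerfectField k]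
    [Infinite k]
    [CommRing O] [IsDomain O] [IsNoetherianRing O] [IsLocalRing O] [Algebra k O]
    [Field K] [Algebra O K] [IsFractionRing O K] [Algebra k K] [IsScalarTower k O K]
    (hdim : ringKrullDim O = 1)
    (hfin : Module.Finite O (integralClosure O K))
    (OB : Submodule O K) (hOB : OB = Subalgebra.toSubmodule (integralClosure O K))
    (r : ℕ) (M : Fin r → Ideal (integralClosure O K))
    (hMmax : ∀ i, (M i).IsMaximal)
    (hMinj : Function.Injective M)
    (hMall : ∀ P : Ideal (integralClosure O K), P.IsMaximal → ∃ i, P = M i)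
    (v : Fin r → K → ℤ)
    (hvmul : ∀ (i : Fin r) (x y : K), x ≠ 0 → y ≠ 0 → v i (x * y) = v i x + v i y)
    (hvadd : ∀ (i : Fin r) (x y : K), x ≠ 0 → y ≠ 0 → x + y ≠ 0 →
      min (v i x) (v i y) ≤ v i (x + y))
    (hvsurj : ∀ (i : Fin r) (n : ℤ), ∃ x : K, x ≠ 0 ∧ v i x = n)
    (hvint : ∀ x : K, x ≠ 0 → (x ∈ integralClosure O K ↔ ∀ i, 0 ≤ v i x))
    (hvmax : ∀ (i : Fin r) (x : K) (hx : x ∈ integralClosure O K), x ≠ 0 →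
      ((⟨x, hx⟩ : integralClosure O K) ∈ M i ↔ 1 ≤ v i x))
    (d : Fin r → ℕ) (hd : ∀ i, d i = Module.finrank k ((integralClosure O K) ⧸ M i))
    (hres : ∀ i, Function.Surjective (algebraMap k ((integralClosure O K) ⧸ M i)))
    (J : Submodule O K → (Fin r → ℤ) → Submodule O K)
    (hJ : ∀ (a : Submodule O K) (w : Fin r → ℤ) (z : K),
      z ∈ J a w ↔ z ∈ a ∧ (z = 0 ∨ ∀ i, w i ≤ v i z))
    (b : Submodule O K) (hb : IsFracIdeal b) :
    ∀ w : Fin r → ℤ,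
      (∃ z : K, z ∈ b ∧ z ≠ 0 ∧ ∀ i, v i z = w i) ↔
        ∀ i : Fin r, J b w ≠ J b (w + Pi.single i 1) :=
  statement_9_general k O K r v hvmul hvadd hvint J hJ b hb
end

section
/- Let b be a fractional ideal of O. Then: (a) 0 ≤ γ^b ≤ γ componentwise; (b) if b·Ō = Ō, then J^K(γ^b) ⊆ b, and every n ∈ ℤ^r with J^K(n) ⊆ b satisfies n ≥ γ^b componentwise (i.e., γ^b is the least n with J^K(n) ⊆ b). (Lemma 3.4) -/
structure IsIntValuation {K : Type*} [Field K] (w : K → ℤ) : Prop where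
  map_mul : ∀ x y, x ≠ 0 → y ≠ 0 → w (x * y) = w x + w y
  min_le_map_add : ∀ x y, x ≠ 0 → y ≠ 0 → x + y ≠ 0 → min (w x) (w y) ≤ w (x + y)

namespace IsIntValuation

variable {K : Type*} [Field K] {w : K → ℤ}

theorem map_one (hw : IsIntValuation w) : w 1 = 0 := by
  have h := hw.map_mul 1 1 one_ne_zero one_ne_zero
  rw [mul_one] at h
  omega

theorem map_neg (hw : IsIntValuation w) {x : K} (hx : x ≠ 0) : w (-x) = w x := by
  have h₁ := hw.map_mul (-1) (-1) (by norm_num) (by norm_num)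
  have h₂ := hw.map_mul (-1) x (by norm_num) hx
  rw [mul_neg_one, neg_neg, hw.map_one] at h₁
  rw [neg_one_mul] at h₂
  omega

theorem map_pow (hw : IsIntValuation w) {x : K} (hx : x ≠ 0) (m : ℕ) : w (x ^ m) = m * w x := by
  induction m with
  | zero => simp [hw.map_one]
  | succ m ih =>
    rw [pow_succ, hw.map_mul _ x (pow_ne_zero _ hx) hx, ih]
    push_cast
    ring

theorem le_map_add (hw : IsIntValuation w) {c : ℤ} {x y : K} (hx : x ≠ 0 → c ≤ w x)
    (hy : y ≠ 0 → c ≤ w y) (hxy : x + y ≠ 0) : c ≤ w (x + y) := by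
  rcases eq_or_ne x 0 with rfl | hx0
  · rw [zero_add] at hxy ⊢
    exact hy hxy
  rcases eq_or_ne y 0 with rfl | hy0
  · rw [add_zero] at hxy ⊢
    exact hx hxy
  exact (le_min (hx hx0) (hy hy0)).trans (hw.min_le_map_add x y hx0 hy0 hxy)

theorem map_add_of_lt (hw : IsIntValuation w) {x y : K} (hx : x ≠ 0) (hy : y ≠ 0 → w x < w y) :
    x + y ≠ 0 ∧ w (x + y) = w x := by
  rcases eq_or_ne y 0 with rfl | hy0
  · simpa using hx
  have hlt := hy hy0
  have hxy : x + y ≠ 0 := by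
    intro h
    rw [add_eq_zero_iff_eq_neg.mp h, hw.map_neg hy0] at hlt
    exact hlt.false
  refine ⟨hxy, le_antisymm ?_ ((le_min le_rfl hlt.le).trans (hw.min_le_map_add x y hx hy0 hxy))⟩
  have h := hw.min_le_map_add (x + y) (-y) hxy (neg_ne_zero.mpr hy0) (by simpa using hx)
  rw [add_neg_cancel_right, hw.map_neg hy0] at h
  omega

theorem map_sum_of_lt (hw : IsIntValuation w) {ι : Type*} [DecidableEq ι] {s : Finset ι}
    {f : ι → K} {j : ι} (hj : j ∈ s) (hj0 : f j ≠ 0)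
    (hlt : ∀ l ∈ s, l ≠ j → f l ≠ 0 → w (f j) < w (f l)) :
    ∑ l ∈ s, f l ≠ 0 ∧ w (∑ l ∈ s, f l) = w (f j) := by
  rw [← Finset.add_sum_erase s f hj]
  refine hw.map_add_of_lt hj0 ?_
  exact Finset.sum_induction f (fun z => z ≠ 0 → w (f j) < w z)
    (fun _ _ ha hb => hw.le_map_add ha hb) (fun h => (h rfl).elim)
    (fun l hl => hlt l (Finset.mem_of_mem_erase hl) (Finset.ne_of_mem_erase hl))

end IsIntValuation

namespace Submodule

variable {R A : Type*} [CommSemiring R] [CommSemiring A] [Algebra R A] {a B : Submodule R A}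

theorem div_le_of_one_mem (h : (1 : A) ∈ B) : a / B ≤ a := fun x hx => by
  simpa using mem_div_iff_forall_mul_mem.mp hx 1 h

theorem le_mul_of_one_mem (h : (1 : A) ∈ B) : a ≤ a * B := calc
  a = a * 1 := (mul_one a).symm
  _ ≤ a * B := by gcongr; exact one_le.mpr h

theorem one_div_mul_le_div : 1 / B * a ≤ a / B :=
  le_div_iff_mul_le.mpr <| calc
    1 / B * a * B = a * (B * (1 / B)) := by ring
    _ ≤ a * 1 := by gcongr; exact mul_one_div_le_one
    _ = a := mul_one a

theorem one_div_mul_mul_le_div (hB : B * B ≤ B) : 1 / B * (a * B) ≤ a / B :=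
  le_div_iff_mul_le.mpr <| calc
    1 / B * (a * B) * B = a * (B * B) * (1 / B) := by ring
    _ ≤ a * B * (1 / B) := by gcongr
    _ = a * (B * (1 / B)) := by ring
    _ ≤ a * 1 := by gcongr; exact mul_one_div_le_one
    _ = a := mul_one a

theorem div_mul_le_div (hB : B * B ≤ B) : a / B * B ≤ a / B :=
  le_div_iff_mul_le.mpr <| calc
    a / B * B * B = a / B * (B * B) := mul_assoc _ _ _
    _ ≤ a / B * B := by gcongr
    _ ≤ a := le_div_iff_mul_le.mp le_rfl

theorem div_ne_bot [NoZeroDivisors A] (ha : a ≠ ⊥) (hB : 1 / B ≠ ⊥) : a / B ≠ ⊥ := fun h =>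
  (mul_eq_bot.mp (le_bot_iff.mp (h ▸ one_div_mul_le_div))).elim hB ha

end Submodule

section ValueVectors

variable {O K : Type} [CommRing O] [Field K] [Algebra O K] {r : ℕ} {v : Fin r → K → ℤ}

def ValBddBelow (v : Fin r → K → ℤ) (a : Submodule O K) : Prop :=
  ∃ c : Fin r → ℤ, ∀ z ∈ a, z ≠ 0 → ∀ i, c i ≤ v i z

theorem ValBddBelow.mono {a a' : Submodule O K} (h : a' ≤ a) (ha : ValBddBelow v a) :
    ValBddBelow v a' :=
  let ⟨c, hc⟩ := ha
  ⟨c, fun z hz => hc z (h hz)⟩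

theorem ValBddBelow.mul (hv : ∀ i, IsIntValuation (v i)) {a a' : Submodule O K}
    (ha : ValBddBelow v a) (ha' : ValBddBelow v a') : ValBddBelow v (a * a') := by
  obtain ⟨c, hc⟩ := ha
  obtain ⟨c', hc'⟩ := ha'
  refine ⟨c + c', fun z hz => Submodule.mul_induction_on hz ?_ ?_⟩
  · intro m hm n hn hmn i
    rw [(hv i).map_mul m n (left_ne_zero_of_mul hmn) (right_ne_zero_of_mul hmn)]
    exact add_le_add (hc m hm (left_ne_zero_of_mul hmn) i) (hc' n hn (right_ne_zero_of_mul hmn) i)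
  · exact fun x y hx hy hxy i => (hv i).le_map_add (fun h => hx h i) (fun h => hy h i) hxy

theorem ValBddBelow.bddBelow {a : Submodule O K} (ha : ValBddBelow v a) (i : Fin r) :
    BddBelow {n : ℤ | ∃ z ∈ a, z ≠ 0 ∧ v i z = n} := by
  obtain ⟨c, hc⟩ := ha
  refine ⟨c i, ?_⟩
  rintro _ ⟨z, hz, hz0, rfl⟩
  exact hc z hz hz0 i

theorem idealVal_le {a : Submodule O K} (ha : ValBddBelow v a) {z : K} (hz : z ∈ a) (hz0 : z ≠ 0)
    (i : Fin r) : idealVal v a i ≤ v i z :=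
  csInf_le (ha.bddBelow i) ⟨z, hz, hz0, rfl⟩

theorem exists_val_eq_idealVal {a : Submodule O K} (hne : a ≠ ⊥) (ha : ValBddBelow v a)
    (i : Fin r) : ∃ z ∈ a, z ≠ 0 ∧ v i z = idealVal v a i := by
  obtain ⟨z, hz, hz0⟩ := (Submodule.ne_bot_iff a).mp hne
  exact Int.csInf_mem (s := {n : ℤ | ∃ z ∈ a, z ≠ 0 ∧ v i z = n}) ⟨v i z, z, hz, hz0, rfl⟩
    (ha.bddBelow i)

theorem idealVal_le_idealVal {a a' : Submodule O K} (h : a ≤ a') (hne : a ≠ ⊥)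
    (ha' : ValBddBelow v a') (i : Fin r) : idealVal v a' i ≤ idealVal v a i := by
  obtain ⟨z, hz, hz0, hzv⟩ := exists_val_eq_idealVal hne (ha'.mono h) i
  exact hzv ▸ idealVal_le ha' (h hz) hz0 i

theorem idealVal_le_add_of_mul_le (hv : ∀ i, IsIntValuation (v i)) {a a' c : Submodule O K}
    (h : a * a' ≤ c) (hne : a ≠ ⊥) (hne' : a' ≠ ⊥) (ha : ValBddBelow v a)
    (ha' : ValBddBelow v a') (hc : ValBddBelow v c) (i : Fin r) :
    idealVal v c i ≤ idealVal v a i + idealVal v a' i := by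
  obtain ⟨x, hx, hx0, hxv⟩ := exists_val_eq_idealVal hne ha i
  obtain ⟨y, hy, hy0, hyv⟩ := exists_val_eq_idealVal hne' ha' i
  rw [← hxv, ← hyv, ← (hv i).map_mul x y hx0 hy0]
  exact idealVal_le hc (h (Submodule.mul_mem_mul hx hy)) (mul_ne_zero hx0 hy0) i

end ValueVectors

section Separators

variable {O K : Type} [CommRing O] [Field K] [Algebra O K] {r : ℕ} {v : Fin r → K → ℤ}

def IsSeparator (v : Fin r → K → ℤ) (i : Fin r) (u : K) : Prop :=
  u ≠ 0 ∧ v i u = 0 ∧ ∀ j, j ≠ i → 0 < v j u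

theorem exists_isSeparator (S : Subalgebra O K) (M : Fin r → Ideal S)
    (hMmax : ∀ i, (M i).IsMaximal) (hMinj : Function.Injective M)
    (hS : ∀ x ∈ S, x ≠ 0 → ∀ i, 0 ≤ v i x)
    (hM : ∀ (i : Fin r) (x : K) (hx : x ∈ S), x ≠ 0 → ((⟨x, hx⟩ : S) ∈ M i ↔ 1 ≤ v i x))
    (i : Fin r) : ∃ u ∈ S, IsSeparator v i u := by
  have hnotle : ¬ ∏ j ∈ Finset.univ.erase i, M j ≤ M i := by
    rw [Ideal.IsPrime.prod_le (hMmax i).isPrime]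
    rintro ⟨j, hj, hle⟩
    exact Finset.ne_of_mem_erase hj (hMinj ((hMmax j).eq_of_le (hMmax i).ne_top hle))
  obtain ⟨u, huP, huM⟩ := SetLike.not_le_iff_exists.mp hnotle
  have hu0 : (u : K) ≠ 0 := fun h => huM (ZeroMemClass.coe_eq_zero.mp h ▸ (M i).zero_mem)
  refine ⟨u, u.2, hu0, ?_, fun j hji => ?_⟩
  · have h := (hM i u u.2 hu0).not.mp huM
    have := hS u u.2 hu0 i
    omega
  · have humem : u ∈ M j :=
      Ideal.prod_le_inf.trans (Finset.inf_le (Finset.mem_erase.mpr ⟨hji, Finset.mem_univ j⟩)) huP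
    exact (hM j u u.2 hu0).mp humem

theorem exists_val_eq_and_forall_le (hv : ∀ i, IsIntValuation (v i))
    (hsep : ∀ i, ∃ u, IsSeparator v i u) (hsurj : ∀ (i : Fin r) (n : ℤ), ∃ x : K, x ≠ 0 ∧ v i x = n)
    (n : Fin r → ℤ) (i : Fin r) : ∃ z : K, z ≠ 0 ∧ v i z = n i ∧ ∀ j, n j ≤ v j z := by
  obtain ⟨x, hx0, hxv⟩ := hsurj i (n i)
  obtain ⟨u, hu0, hui, huj⟩ := hsep i
  set m : ℕ := Finset.univ.sup fun j => (n j - v j x).toNat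
  have hm : ∀ j, n j - v j x ≤ m := fun j =>
    (Int.self_le_toNat _).trans
      (Nat.cast_le.mpr (Finset.le_sup (f := fun j => (n j - v j x).toNat) (Finset.mem_univ j)))
  have hval : ∀ j, v j (x * u ^ m) = v j x + m * v j u := fun j => by
    rw [(hv j).map_mul _ _ hx0 (pow_ne_zero _ hu0), (hv j).map_pow hu0]
  refine ⟨x * u ^ m, mul_ne_zero hx0 (pow_ne_zero _ hu0), by rw [hval, hui]; omega, fun j => ?_⟩
  rw [hval]
  rcases eq_or_ne j i with rfl | hji
  · rw [hui]; omega
  · have := hm j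
    nlinarith [huj j hji]

theorem exists_forall_val_eq_idealVal (hv : ∀ i, IsIntValuation (v i)) {a B : Submodule O K}
    (hsep : ∀ i, ∃ u ∈ B, IsSeparator v i u) (hstab : a * B ≤ a) (hne : a ≠ ⊥)
    (ha : ValBddBelow v a) : ∃ z ∈ a, z ≠ 0 ∧ ∀ i, v i z = idealVal v a i := by
  rcases isEmpty_or_nonempty (Fin r) with hr | ⟨⟨i₀⟩⟩
  · obtain ⟨z, hz, hz0⟩ := (Submodule.ne_bot_iff a).mp hne
    exact ⟨z, hz, hz0, isEmptyElim⟩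
  choose z hz hz0 hzv using exists_val_eq_idealVal hne ha
  choose u huB hu0 hui huj using hsep
  have hval : ∀ i j, v i (z j * u j) = v i (z j) + v i (u j) := fun i j =>
    (hv i).map_mul _ _ (hz0 j) (hu0 j)
  have hsum : ∀ i, ∑ j, z j * u j ≠ 0 ∧ v i (∑ j, z j * u j) = v i (z i * u i) := fun i =>
    (hv i).map_sum_of_lt (Finset.mem_univ i) (mul_ne_zero (hz0 i) (hu0 i)) fun l _ hli _ => by
      rw [hval, hval, hui, hzv]
      have := idealVal_le ha (hz l) (hz0 l) i
      have := huj l i (Ne.symm hli)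
      omega
  refine ⟨∑ j, z j * u j,
    Submodule.sum_mem _ fun j _ => hstab (Submodule.mul_mem_mul (hz j) (huB j)), (hsum i₀).1,
    fun i => ?_⟩
  rw [(hsum i).2, hval, hui, hzv, add_zero]

theorem mem_of_forall_idealVal_le (hv : ∀ i, IsIntValuation (v i)) {a B : Submodule O K}
    (hB : ∀ z : K, z ≠ 0 → (∀ i, 0 ≤ v i z) → z ∈ B) (hsep : ∀ i, ∃ u ∈ B, IsSeparator v i u)
    (hstab : a * B ≤ a) (hne : a ≠ ⊥) (ha : ValBddBelow v a) {z : K}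
    (hz : ∀ i, idealVal v a i ≤ v i z) : z ∈ a := by
  rcases eq_or_ne z 0 with rfl | hz0
  · exact a.zero_mem
  obtain ⟨y, hy, hy0, hyv⟩ := exists_forall_val_eq_idealVal hv hsep hstab hne ha
  have hq : z / y ∈ B := hB _ (div_ne_zero hz0 hy0) fun i => by
    have h := (hv i).map_mul (z / y) y (div_ne_zero hz0 hy0) hy0
    rw [div_mul_cancel₀ z hy0] at h
    linarith [hz i, hyv i]
  simpa [mul_div_cancel₀ z hy0] using hstab (Submodule.mul_mem_mul hy hq)

end Separators

section ValIntegers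

variable {O K : Type} [CommRing O] [Field K] [Algebra O K] {r : ℕ} {v : Fin r → K → ℤ}
  {B : Submodule O K}

def IsValIntegers (v : Fin r → K → ℤ) (B : Submodule O K) : Prop :=
  ∀ z : K, z ≠ 0 → (z ∈ B ↔ ∀ i, 0 ≤ v i z)

namespace IsValIntegers

variable (hB : IsValIntegers v B)
include hB

theorem valBddBelow : ValBddBelow v B :=
  ⟨0, fun z hz hz0 => (hB z hz0).mp hz⟩

theorem one_mem (hv : ∀ i, IsIntValuation (v i)) : (1 : K) ∈ B :=
  (hB 1 one_ne_zero).mpr fun i => (hv i).map_one.ge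

theorem mul_self_le (hv : ∀ i, IsIntValuation (v i)) : B * B ≤ B := by
  refine Submodule.mul_le.mpr fun x hx y hy => ?_
  rcases eq_or_ne (x * y) 0 with h | h
  · exact h ▸ B.zero_mem
  have hx0 := left_ne_zero_of_mul h
  have hy0 := right_ne_zero_of_mul h
  refine (hB _ h).mpr fun i => ?_
  rw [(hv i).map_mul x y hx0 hy0]
  exact add_nonneg ((hB x hx0).mp hx i) ((hB y hy0).mp hy i)

theorem idealVal_eq_zero (hv : ∀ i, IsIntValuation (v i)) (i : Fin r) : idealVal v B i = 0 := by
  have h1 := hB.one_mem hv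
  obtain ⟨z, hz, hz0, hzv⟩ :=
    exists_val_eq_idealVal ((Submodule.ne_bot_iff B).mpr ⟨1, h1, one_ne_zero⟩) hB.valBddBelow i
  exact le_antisymm ((hv i).map_one ▸ idealVal_le hB.valBddBelow h1 one_ne_zero i)
    (hzv ▸ (hB z hz0).mp hz i)

theorem gammaB_eq_idealVal_div (hv : ∀ i, IsIntValuation (v i)) {b : Submodule O K}
    (hbB : b * B = B) : gammaB v B b = idealVal v (b / B) := funext fun i => by
  rw [gammaB, hbB, hB.idealVal_eq_zero hv, sub_zero]

end IsValIntegers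

end ValIntegers

section FractionalIdeals

variable {O K : Type} [CommRing O] [IsDomain O] [Field K] [Algebra O K] [IsFractionRing O K]

theorem IsFracIdeal.valBddBelow {r : ℕ} {v : Fin r → K → ℤ} (hv : ∀ i, IsIntValuation (v i))
    (hO : ValBddBelow v (1 : Submodule O K)) {b : Submodule O K} (hb : IsFracIdeal b) :
    ValBddBelow v b := by
  obtain ⟨-, x, hx, hxb⟩ := hb
  obtain ⟨c, hc⟩ := hO
  have hx0 : algebraMap O K x ≠ 0 := IsFractionRing.to_map_ne_zero_of_mem_nonZeroDivisors hx
  refine ⟨fun i => c i - v i (algebraMap O K x), fun z hz hz0 i => ?_⟩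
  have h := hc _ (hxb z hz) (smul_ne_zero (nonZeroDivisors.ne_zero hx) hz0) i
  rw [Algebra.smul_def, (hv i).map_mul _ _ hx0 hz0] at h
  dsimp only
  omega

theorem IsFracIdeal.valBddBelow_of_isValIntegers {r : ℕ} {v : Fin r → K → ℤ}
    (hv : ∀ i, IsIntValuation (v i)) {B b : Submodule O K} (hB : IsValIntegers v B)
    (hb : IsFracIdeal b) : ValBddBelow v b :=
  hb.valBddBelow hv (hB.valBddBelow.mono (Submodule.one_le.mpr (hB.one_mem hv)))

theorem one_div_ne_bot_of_fg {B : Submodule O K} (hB : B.FG) : 1 / B ≠ ⊥ := by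
  obtain ⟨x, hx, hxB⟩ := FractionalIdeal.isFractional_of_fg (S := nonZeroDivisors O) hB
  refine (Submodule.ne_bot_iff _).mpr
    ⟨algebraMap O K x, Submodule.mem_div_iff_forall_mul_mem.mpr fun y hy => ?_,
      IsFractionRing.to_map_ne_zero_of_mem_nonZeroDivisors hx⟩
  obtain ⟨o, ho⟩ := hxB y hy
  exact Submodule.mem_one.mpr ⟨o, by rw [ho, Algebra.smul_def]⟩

end FractionalIdeals

section Gamma

variable {O K : Type} [CommRing O] [IsDomain O] [Field K] [Algebra O K] [IsFractionRing O K]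
  {r : ℕ} {v : Fin r → K → ℤ} {B b : Submodule O K}

theorem gammaB_nonneg (hv : ∀ i, IsIntValuation (v i)) (hB : IsValIntegers v B)
    (hcond : 1 / B ≠ ⊥) (hb : IsFracIdeal b) : 0 ≤ gammaB v B b := fun i => by
  have h1 := hB.one_mem hv
  have hbdd := hb.valBddBelow_of_isValIntegers hv hB
  exact sub_nonneg.mpr <| idealVal_le_idealVal
    ((Submodule.div_le_of_one_mem h1).trans (Submodule.le_mul_of_one_mem h1))
    (Submodule.div_ne_bot hb.1 hcond) (hbdd.mul hv hB.valBddBelow) i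

theorem gammaB_le_idealVal_one_div (hv : ∀ i, IsIntValuation (v i)) (hB : IsValIntegers v B)
    (hcond : 1 / B ≠ ⊥) (hb : IsFracIdeal b) : gammaB v B b ≤ idealVal v (1 / B) := fun i => by
  have h1 := hB.one_mem hv
  have hbdd := hb.valBddBelow_of_isValIntegers hv hB
  have hbB : b * B ≠ ⊥ := fun h => hb.1 (le_bot_iff.mp (h ▸ Submodule.le_mul_of_one_mem h1))
  refine sub_le_iff_le_add.mpr <| idealVal_le_add_of_mul_le hv
    (Submodule.one_div_mul_mul_le_div (hB.mul_self_le hv)) hcond hbB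
    (hB.valBddBelow.mono ((Submodule.div_le_of_one_mem h1).trans (Submodule.one_le.mpr h1)))
    (hbdd.mul hv hB.valBddBelow) (hbdd.mono (Submodule.div_le_of_one_mem h1)) i

theorem mem_of_forall_gammaB_le (hv : ∀ i, IsIntValuation (v i)) (hB : IsValIntegers v B)
    (hsep : ∀ i, ∃ u ∈ B, IsSeparator v i u) (hcond : 1 / B ≠ ⊥) (hb : IsFracIdeal b)
    (hbB : b * B = B) {z : K} (hz : ∀ i, gammaB v B b i ≤ v i z) : z ∈ b := by
  have h1 := hB.one_mem hv
  have hbdd := hb.valBddBelow_of_isValIntegers hv hB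
  rw [hB.gammaB_eq_idealVal_div hv hbB] at hz
  exact Submodule.div_le_of_one_mem h1 <| mem_of_forall_idealVal_le hv (fun z hz => (hB z hz).mpr)
    hsep (Submodule.div_mul_le_div (hB.mul_self_le hv)) (Submodule.div_ne_bot hb.1 hcond)
    (hbdd.mono (Submodule.div_le_of_one_mem h1)) hz

theorem gammaB_le_of_forall_mem (hv : ∀ i, IsIntValuation (v i)) (hB : IsValIntegers v B)
    (hsep : ∀ i, ∃ u, IsSeparator v i u) (hsurj : ∀ (i : Fin r) (n : ℤ), ∃ x : K, x ≠ 0 ∧ v i x = n)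
    (hb : IsFracIdeal b) (hbB : b * B = B) {n : Fin r → ℤ}
    (hn : ∀ z : K, (∀ i, n i ≤ v i z) → z ∈ b) : gammaB v B b ≤ n := fun i => by
  have h1 := hB.one_mem hv
  have hbdd := hb.valBddBelow_of_isValIntegers hv hB
  obtain ⟨z, hz0, hzi, hzn⟩ := exists_val_eq_and_forall_le hv hsep hsurj n i
  have hz : z ∈ b / B := Submodule.mem_div_iff_forall_mul_mem.mpr fun y hy => by
    rcases eq_or_ne y 0 with rfl | hy0
    · simp
    refine hn _ fun j => ?_
    rw [(hv j).map_mul z y hz0 hy0]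
    linarith [hzn j, (hB y hy0).mp hy j]
  rw [hB.gammaB_eq_idealVal_div hv hbB, ← hzi]
  exact idealVal_le (hbdd.mono (Submodule.div_le_of_one_mem h1)) hz hz0 i

end Gamma

theorem statement_11_general (O K : Type) [CommRing O] [IsDomain O] [Field K] [Algebra O K]
    [IsFractionRing O K]
    (hfin : Module.Finite O (integralClosure O K))
    (OB : Submodule O K) (hOB : OB = Subalgebra.toSubmodule (integralClosure O K))
    (r : ℕ) (M : Fin r → Ideal (integralClosure O K))
    (hMmax : ∀ i, (M i).IsMaximal)
    (hMinj : Function.Injective M)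
    (v : Fin r → K → ℤ)
    (hvmul : ∀ (i : Fin r) (x y : K), x ≠ 0 → y ≠ 0 → v i (x * y) = v i x + v i y)
    (hvadd : ∀ (i : Fin r) (x y : K), x ≠ 0 → y ≠ 0 → x + y ≠ 0 →
      min (v i x) (v i y) ≤ v i (x + y))
    (hvsurj : ∀ (i : Fin r) (n : ℤ), ∃ x : K, x ≠ 0 ∧ v i x = n)
    (hvint : ∀ x : K, x ≠ 0 → (x ∈ integralClosure O K ↔ ∀ i, 0 ≤ v i x))
    (hvmax : ∀ (i : Fin r) (x : K) (hx : x ∈ integralClosure O K), x ≠ 0 →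
      ((⟨x, hx⟩ : integralClosure O K) ∈ M i ↔ 1 ≤ v i x))
    (J : Submodule O K → (Fin r → ℤ) → Submodule O K)
    (hJ : ∀ (a : Submodule O K) (w : Fin r → ℤ) (z : K),
      z ∈ J a w ↔ z ∈ a ∧ (z = 0 ∨ ∀ i, w i ≤ v i z))
    (b : Submodule O K) (hb : IsFracIdeal b)
    (γb : Fin r → ℤ) (hγb : γb = gammaB v OB b) :
    ((0 : Fin r → ℤ) ≤ γb ∧ γb ≤ idealVal v ((1 : Submodule O K) / OB)) ∧
    (b * OB = OB →
      (J (⊤ : Submodule O K) γb ≤ b ∧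
        ∀ n : Fin r → ℤ, J (⊤ : Submodule O K) n ≤ b → γb ≤ n)) := by
  subst hγb hOB
  have hv : ∀ i, IsIntValuation (v i) := fun i => ⟨hvmul i, hvadd i⟩
  have hB : IsValIntegers v (Subalgebra.toSubmodule (integralClosure O K)) := hvint
  have hcond := one_div_ne_bot_of_fg
    ((Module.Finite.iff_fg (N := Subalgebra.toSubmodule (integralClosure O K))).mp hfin)
  have hsep := exists_isSeparator _ M hMmax hMinj (fun x hx hx0 => (hvint x hx0).mp hx) hvmax
  refine ⟨⟨gammaB_nonneg hv hB hcond hb, gammaB_le_idealVal_one_div hv hB hcond hb⟩,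
    fun hbB => ⟨fun z hz => ?_, fun n hn => ?_⟩⟩
  · obtain ⟨-, rfl | hz⟩ := (hJ _ _ z).mp hz
    · exact b.zero_mem
    · exact mem_of_forall_gammaB_le hv hB hsep hcond hb hbB hz
  · exact gammaB_le_of_forall_mem hv hB (fun i => (hsep i).imp fun _ => And.right) hvsurj hb hbB
      fun z hz => hn ((hJ _ _ z).mpr ⟨trivial, Or.inr hz⟩)

theorem statement_11 (k O K : Type) [Field k] [PerfectField k]
    [CommRing O] [IsDomain O] [IsNoetherianRing O] [IsLocalRing O] [Algebra k O]
    [Field K] [Algebra O K] [IsFractionRing O K] [Algebra k K] [IsScalarTower k O K]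
    (hdim : ringKrullDim O = 1)
    (hfin : Module.Finite O (integralClosure O K))
    (OB : Submodule O K) (hOB : OB = Subalgebra.toSubmodule (integralClosure O K))
    (r : ℕ) (M : Fin r → Ideal (integralClosure O K))
    (hMmax : ∀ i, (M i).IsMaximal)
    (hMinj : Function.Injective M)
    (hMall : ∀ P : Ideal (integralClosure O K), P.IsMaximal → ∃ i, P = M i)
    (v : Fin r → K → ℤ)
    (hvmul : ∀ (i : Fin r) (x y : K), x ≠ 0 → y ≠ 0 → v i (x * y) = v i x + v i y)
    (hvadd : ∀ (i : Fin r) (x y : K), x ≠ 0 → y ≠ 0 → x + y ≠ 0 →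
      min (v i x) (v i y) ≤ v i (x + y))
    (hvsurj : ∀ (i : Fin r) (n : ℤ), ∃ x : K, x ≠ 0 ∧ v i x = n)
    (hvint : ∀ x : K, x ≠ 0 → (x ∈ integralClosure O K ↔ ∀ i, 0 ≤ v i x))
    (hvmax : ∀ (i : Fin r) (x : K) (hx : x ∈ integralClosure O K), x ≠ 0 →
      ((⟨x, hx⟩ : integralClosure O K) ∈ M i ↔ 1 ≤ v i x))
    (d : Fin r → ℕ) (hd : ∀ i, d i = Module.finrank k ((integralClosure O K) ⧸ M i))
    (J : Submodule O K → (Fin r → ℤ) → Submodule O K)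
    (hJ : ∀ (a : Submodule O K) (w : Fin r → ℤ) (z : K),
      z ∈ J a w ↔ z ∈ a ∧ (z = 0 ∨ ∀ i, w i ≤ v i z))
    (b : Submodule O K) (hb : IsFracIdeal b)
    (γb : Fin r → ℤ) (hγb : γb = gammaB v OB b) :
    ((0 : Fin r → ℤ) ≤ γb ∧ γb ≤ idealVal v ((1 : Submodule O K) / OB)) ∧
    (b * OB = OB →
      (J (⊤ : Submodule O K) γb ≤ b ∧
        ∀ n : Fin r → ℤ, J (⊤ : Submodule O K) n ≤ b → γb ≤ n)) :=
  statement_11_general O K hfin OB hOB r M hMmax hMinj v hvmul hvadd hvsurj hvint hvmax J hJ b hb γb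
    hγb
end
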